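/- arXiv:1108.5058 — 7 statements merged into one kernel-verified Lean document; each statement's English description precedes it below -/
import Mathlib

section
/- The linear discrete-time system (A) is P-nonuniformly exponentially dichotomic if and only if there exist a constant d>0 and a sequence S:ℕ→(0,∞) such that for all natural numbers m ≥ n ≥ p and all x ∈ X, the series Σ_{j=n}^{∞} e^{d(j−n)}‖𝒜_P(j,p)x‖ converges and Σ_{j=n}^{∞} e^{d(j−n)}‖𝒜_P(j,p)x‖ + Σ_{k=n}^{m} e^{d(m−k)}‖𝒜_Q(k,n)x‖ ≤ S(n)‖𝒜_P(n,p)x‖ + S(m)‖𝒜_Q(m,n)x‖. -/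
open Real

/-- The evolution operator started at time `n`, after `k` steps:
`A(n+k) ⋯ A(n+1)`. -/
noncomputable def evolFrom {X : Type*} [NormedAddCommGroup X] [NormedSpace ℝ X]
    (A : ℕ → X →L[ℝ] X) (n : ℕ) : ℕ → X →L[ℝ] X
  | 0 => 1
  | k + 1 => (A (n + k + 1)).comp (evolFrom A n k)

/-- The evolution operator `𝒜(m,n) = A(m) ⋯ A(n+1)` for `m ≥ n`, `𝒜(n,n) = I`. -/
noncomputable def evol {X : Type*} [NormedAddCommGroup X] [NormedSpace ℝ X]
    (A : ℕ → X →L[ℝ] X) (m n : ℕ) : X →L[ℝ] X :=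
  evolFrom A n (m - n)

/-- `𝒜_P(m,n) = 𝒜(m,n) P(n)`. -/
noncomputable def evolP {X : Type*} [NormedAddCommGroup X] [NormedSpace ℝ X]
    (A P : ℕ → X →L[ℝ] X) (m n : ℕ) : X →L[ℝ] X :=
  (evol A m n).comp (P n)

/-- `𝒜_Q(m,n) = 𝒜(m,n) Q(n)` where `Q(n) = I - P(n)`. -/
noncomputable def evolQ {X : Type*} [NormedAddCommGroup X] [NormedSpace ℝ X]
    (A P : ℕ → X →L[ℝ] X) (m n : ℕ) : X →L[ℝ] X :=
  (evol A m n).comp (1 - P n)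

/-- The system is P-nonuniformly exponentially dichotomic. -/
def IsNED {X : Type*} [NormedAddCommGroup X] [NormedSpace ℝ X]
    (A P : ℕ → X →L[ℝ] X) : Prop :=
  ∃ α : ℝ, 0 < α ∧ ∃ N : ℕ → ℝ, (∀ n, 0 < N n) ∧ Monotone N ∧
    ∀ m n : ℕ, n ≤ m → ∀ x : X,
      exp (α * ((m : ℝ) - n)) * (‖evolP A P m n x‖ + ‖(1 - P n) x‖) ≤
        N n * ‖P n x‖ + N m * ‖evolQ A P m n x‖


/-! Evaluating the dichotomy estimate at `y = 𝒜_P(n,p)x`, which lies in the range of `P(n)`, gives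
`e^{αj} ‖𝒜_P(n+j,p)x‖ ≤ N(n) ‖𝒜_P(n,p)x‖`; evaluating it at `z = 𝒜_Q(k,n)x`, which lies in the
kernel of `P(k)`, gives `e^{α(m-k)} ‖𝒜_Q(k,n)x‖ ≤ N(m) ‖𝒜_Q(m,n)x‖`. With `d = α/2` both sums are
then dominated by geometric series of ratio `e^{-α/2}`. Conversely, at `p = n` the terms `j = m - n`
and `k = n` of the two sums already give the dichotomy estimate, with `N` any monotone majorant of
`S`, such as its partial sums. -/

lemma exp_half_mul_mul_le_geometric {α a C : ℝ} {j : ℕ} (h : exp (α * j) * a ≤ C) :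
    exp (α / 2 * j) * a ≤ exp (-(α / 2)) ^ j * C := by
  have hsplit : exp (α / 2 * j) = exp (-(α / 2)) ^ j * exp (α * j) := by
    rw [← exp_nat_mul, ← exp_add]
    ring_nf
  rw [hsplit, mul_assoc]
  exact mul_le_mul_of_nonneg_left h (by positivity)

lemma summable_and_tsum_exp_half_mul_le {α C : ℝ} (hα : 0 < α) {a : ℕ → ℝ} (ha : ∀ j, 0 ≤ a j)
    (h : ∀ j : ℕ, exp (α * j) * a j ≤ C) :
    Summable (fun j : ℕ => exp (α / 2 * j) * a j) ∧
      ∑' j : ℕ, exp (α / 2 * j) * a j ≤ C / (1 - exp (-(α / 2))) := by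
  have hr0 : 0 ≤ exp (-(α / 2)) := (exp_pos _).le
  have hr1 : exp (-(α / 2)) < 1 := exp_lt_one_iff.2 (by linarith)
  have hgeom := (summable_geometric_of_lt_one hr0 hr1).mul_right C
  have hle (j : ℕ) := exp_half_mul_mul_le_geometric (h j)
  have hsum := Summable.of_nonneg_of_le (fun j => mul_nonneg (exp_pos _).le (ha j)) hle hgeom
  refine ⟨hsum, ?_⟩
  calc ∑' j : ℕ, exp (α / 2 * j) * a j ≤ ∑' j : ℕ, exp (-(α / 2)) ^ j * C :=
        hsum.tsum_le_tsum hle hgeom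
    _ = C / (1 - exp (-(α / 2))) := by
        rw [tsum_mul_right, tsum_geometric_of_lt_one hr0 hr1, inv_mul_eq_div]

lemma geom_sum_Icc_pow_sub_le {r : ℝ} (hr0 : 0 ≤ r) (hr1 : r < 1) (n m : ℕ) :
    ∑ k ∈ Finset.Icc n m, r ^ (m - k) ≤ 1 / (1 - r) := by
  rw [← Finset.Ico_add_one_right_eq_Icc, Finset.sum_Ico_reflect _ _ le_rfl]
  simpa using geom_sum_Ico_le_of_lt_one (m := 0) (n := m + 1 - n) hr0 hr1

lemma sum_Icc_exp_half_mul_le {α C : ℝ} (hα : 0 < α) (hC : 0 ≤ C) {a : ℕ → ℝ} {n m : ℕ}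
    (h : ∀ k ∈ Finset.Icc n m, exp (α * ((m : ℝ) - k)) * a k ≤ C) :
    ∑ k ∈ Finset.Icc n m, exp (α / 2 * ((m : ℝ) - k)) * a k ≤ C / (1 - exp (-(α / 2))) := by
  have hr1 : exp (-(α / 2)) < 1 := exp_lt_one_iff.2 (by linarith)
  have hle : ∀ k ∈ Finset.Icc n m,
      exp (α / 2 * ((m : ℝ) - k)) * a k ≤ exp (-(α / 2)) ^ (m - k) * C := by
    intro k hk
    have hkm : k ≤ m := (Finset.mem_Icc.1 hk).2
    have hk := h k hk
    rw [← Nat.cast_sub hkm] at hk ⊢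
    exact exp_half_mul_mul_le_geometric hk
  calc ∑ k ∈ Finset.Icc n m, exp (α / 2 * ((m : ℝ) - k)) * a k
      ≤ (∑ k ∈ Finset.Icc n m, exp (-(α / 2)) ^ (m - k)) * C := by
        rw [Finset.sum_mul]
        exact Finset.sum_le_sum hle
    _ ≤ 1 / (1 - exp (-(α / 2))) * C :=
        mul_le_mul_of_nonneg_right (geom_sum_Icc_pow_sub_le (exp_pos _).le hr1 n m) hC
    _ = C / (1 - exp (-(α / 2))) := one_div_mul_eq_div _ _

lemma exists_monotone_ge_of_pos {S : ℕ → ℝ} (hS : ∀ n, 0 < S n) :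
    ∃ N : ℕ → ℝ, (∀ n, 0 < N n) ∧ Monotone N ∧ ∀ n, S n ≤ N n :=
  ⟨fun n => ∑ k ∈ Finset.range (n + 1), S k,
    fun _ => Finset.sum_pos (fun k _ => hS k) Finset.nonempty_range_add_one,
    fun _ _ hab => Finset.sum_le_sum_of_subset_of_nonneg
      (Finset.range_subset_range.2 (Nat.add_le_add_right hab 1)) fun k _ _ => (hS k).le,
    fun n => Finset.single_le_sum (fun k _ => (hS k).le) (Finset.self_mem_range_succ n)⟩

section Evolution

variable {X : Type*} [NormedAddCommGroup X] [NormedSpace ℝ X] (A P : ℕ → X →L[ℝ] X)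

@[simp]
lemma evol_self (n : ℕ) : evol A n n = 1 := by
  simp [evol, evolFrom]

lemma evol_succ {m n : ℕ} (h : n ≤ m) : evol A (m + 1) n = (A (m + 1)).comp (evol A m n) := by
  rw [evol, evol, show m + 1 - n = m - n + 1 by omega, evolFrom, Nat.add_sub_cancel' h]

lemma evol_comp {m n p : ℕ} (hpn : p ≤ n) (hnm : n ≤ m) :
    (evol A m n).comp (evol A n p) = evol A m p := by
  induction m, hnm using Nat.le_induction with
  | base => ext; simp
  | succ m hm ih =>
    rw [evol_succ A hm, evol_succ A (hpn.trans hm), ContinuousLinearMap.comp_assoc, ih]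

variable {A P}

lemma evol_comp_proj (hCompat : ∀ n, (A (n + 1)).comp (P n) = (P (n + 1)).comp (A (n + 1)))
    {m n : ℕ} (hnm : n ≤ m) : (evol A m n).comp (P n) = (P m).comp (evol A m n) := by
  induction m, hnm using Nat.le_induction with
  | base => ext; simp
  | succ m hm ih =>
    simp only [evol_succ A hm, ContinuousLinearMap.comp_assoc, ih]
    rw [← ContinuousLinearMap.comp_assoc, hCompat, ContinuousLinearMap.comp_assoc]

lemma proj_comp_evolP (hProj : ∀ n, (P n).comp (P n) = P n)
    (hCompat : ∀ n, (A (n + 1)).comp (P n) = (P (n + 1)).comp (A (n + 1))) {n p : ℕ} (hpn : p ≤ n) :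
    (P n).comp (evolP A P n p) = evolP A P n p := by
  rw [evolP, ← ContinuousLinearMap.comp_assoc, ← evol_comp_proj hCompat hpn,
    ContinuousLinearMap.comp_assoc, hProj]

lemma proj_comp_evolQ (hProj : ∀ n, (P n).comp (P n) = P n)
    (hCompat : ∀ n, (A (n + 1)).comp (P n) = (P (n + 1)).comp (A (n + 1))) {k n : ℕ} (hnk : n ≤ k) :
    (P k).comp (evolQ A P k n) = 0 := by
  rw [evolQ, ← ContinuousLinearMap.comp_assoc, ← evol_comp_proj hCompat hnk,
    ContinuousLinearMap.comp_assoc, ContinuousLinearMap.comp_sub, ContinuousLinearMap.one_def,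
    ContinuousLinearMap.comp_id, hProj, sub_self, ContinuousLinearMap.comp_zero]

variable (A P)

lemma evol_comp_evolP {m n p : ℕ} (hpn : p ≤ n) (hnm : n ≤ m) :
    (evol A m n).comp (evolP A P n p) = evolP A P m p := by
  rw [evolP, evolP, ← ContinuousLinearMap.comp_assoc, evol_comp A hpn hnm]

lemma evol_comp_evolQ {m k n : ℕ} (hnk : n ≤ k) (hkm : k ≤ m) :
    (evol A m k).comp (evolQ A P k n) = evolQ A P m n := by
  rw [evolQ, evolQ, ← ContinuousLinearMap.comp_assoc, evol_comp A hnk hkm]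

@[simp]
lemma evolP_self (n : ℕ) : evolP A P n n = P n := by
  ext; simp [evolP]

@[simp]
lemma evolQ_self (n : ℕ) : evolQ A P n n = 1 - P n := by
  ext; simp [evolQ]

end Evolution

section Dichotomy

variable {X : Type*} [NormedAddCommGroup X] [NormedSpace ℝ X] {A P : ℕ → X →L[ℝ] X} {α : ℝ}
  {N : ℕ → ℝ}

/-- `IsNED A P` is definitionally the existence of `α > 0` and a positive monotone `N` with
`DichotomyBound A P α N`. -/
def DichotomyBound (A P : ℕ → X →L[ℝ] X) (α : ℝ) (N : ℕ → ℝ) : Prop :=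
  ∀ m n : ℕ, n ≤ m → ∀ x : X,
    exp (α * ((m : ℝ) - n)) * (‖evolP A P m n x‖ + ‖(1 - P n) x‖) ≤
      N n * ‖P n x‖ + N m * ‖evolQ A P m n x‖

lemma DichotomyBound.exp_mul_norm_evol_le_of_apply_eq_self (h : DichotomyBound A P α N)
    {m n : ℕ} (hnm : n ≤ m) {y : X} (hy : P n y = y) :
    exp (α * ((m : ℝ) - n)) * ‖evol A m n y‖ ≤ N n * ‖y‖ := by
  have hQy : (1 - P n) y = 0 := by simp [hy]
  simpa [evolP, evolQ, hy, hQy] using h m n hnm y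

lemma DichotomyBound.exp_mul_norm_le_of_apply_eq_zero (h : DichotomyBound A P α N)
    {m n : ℕ} (hnm : n ≤ m) {z : X} (hz : P n z = 0) :
    exp (α * ((m : ℝ) - n)) * ‖z‖ ≤ N m * ‖evol A m n z‖ := by
  have hQz : (1 - P n) z = z := by simp [hz]
  simpa [evolP, evolQ, hz, hQz] using h m n hnm z

lemma DichotomyBound.exp_mul_norm_evolP_le (h : DichotomyBound A P α N)
    (hProj : ∀ n, (P n).comp (P n) = P n)
    (hCompat : ∀ n, (A (n + 1)).comp (P n) = (P (n + 1)).comp (A (n + 1))) {n p : ℕ}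
    (hpn : p ≤ n) (j : ℕ) (x : X) :
    exp (α * j) * ‖evolP A P (n + j) p x‖ ≤ N n * ‖evolP A P n p x‖ := by
  have hP := h.exp_mul_norm_evol_le_of_apply_eq_self (Nat.le_add_right n j)
    (by simpa using DFunLike.congr_fun (proj_comp_evolP hProj hCompat hpn) x)
  rwa [← ContinuousLinearMap.comp_apply, evol_comp_evolP A P hpn (Nat.le_add_right n j),
    Nat.cast_add, add_sub_cancel_left] at hP

lemma DichotomyBound.exp_mul_norm_evolQ_le (h : DichotomyBound A P α N)
    (hProj : ∀ n, (P n).comp (P n) = P n)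
    (hCompat : ∀ n, (A (n + 1)).comp (P n) = (P (n + 1)).comp (A (n + 1))) {m k n : ℕ}
    (hnk : n ≤ k) (hkm : k ≤ m) (x : X) :
    exp (α * ((m : ℝ) - k)) * ‖evolQ A P k n x‖ ≤ N m * ‖evolQ A P m n x‖ := by
  have hQ := h.exp_mul_norm_le_of_apply_eq_zero hkm
    (by simpa using DFunLike.congr_fun (proj_comp_evolQ hProj hCompat hnk) x)
  rwa [← ContinuousLinearMap.comp_apply, evol_comp_evolQ A P hnk hkm] at hQ

lemma DichotomyBound.summable_and_sum_le (h : DichotomyBound A P α N) (hα : 0 < α)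
    (hN0 : ∀ n, 0 ≤ N n) (hProj : ∀ n, (P n).comp (P n) = P n)
    (hCompat : ∀ n, (A (n + 1)).comp (P n) = (P (n + 1)).comp (A (n + 1)))
    {m n p : ℕ} (hpn : p ≤ n) (x : X) :
    Summable (fun j : ℕ => exp (α / 2 * j) * ‖evolP A P (n + j) p x‖) ∧
      (∑' j : ℕ, exp (α / 2 * j) * ‖evolP A P (n + j) p x‖) +
          ∑ k ∈ Finset.Icc n m, exp (α / 2 * ((m : ℝ) - k)) * ‖evolQ A P k n x‖ ≤
        N n / (1 - exp (-(α / 2))) * ‖evolP A P n p x‖ +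
          N m / (1 - exp (-(α / 2))) * ‖evolQ A P m n x‖ := by
  obtain ⟨hsum, hP⟩ := summable_and_tsum_exp_half_mul_le hα (fun _ => norm_nonneg _)
    (h.exp_mul_norm_evolP_le hProj hCompat hpn · x)
  have hQ := sum_Icc_exp_half_mul_le (n := n) hα (mul_nonneg (hN0 m) (norm_nonneg _))
    fun k hk => (Finset.mem_Icc.1 hk).elim fun hnk hkm =>
      h.exp_mul_norm_evolQ_le hProj hCompat hnk hkm x
  refine ⟨hsum, ?_⟩
  rw [div_mul_eq_mul_div, div_mul_eq_mul_div]
  exact add_le_add hP hQ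

lemma dichotomyBound_of_sum_le {d : ℝ} {S : ℕ → ℝ} (hSN : ∀ n, S n ≤ N n)
    (hS : ∀ m n : ℕ, n ≤ m → ∀ x : X,
      Summable (fun j : ℕ => exp (d * j) * ‖evolP A P (n + j) n x‖) ∧
      (∑' j : ℕ, exp (d * j) * ‖evolP A P (n + j) n x‖) +
          ∑ k ∈ Finset.Icc n m, exp (d * ((m : ℝ) - k)) * ‖evolQ A P k n x‖ ≤
        S n * ‖evolP A P n n x‖ + S m * ‖evolQ A P m n x‖) :
    DichotomyBound A P d N := by
  intro m n hnm x
  obtain ⟨hsum, hle⟩ := hS m n hnm x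
  have hP : exp (d * ((m : ℝ) - n)) * ‖evolP A P m n x‖ ≤
      ∑' j : ℕ, exp (d * j) * ‖evolP A P (n + j) n x‖ := by
    simpa [Nat.cast_sub hnm, Nat.add_sub_cancel' hnm] using
      hsum.le_tsum (m - n) fun j _ => by positivity
  have hQ : exp (d * ((m : ℝ) - n)) * ‖(1 - P n) x‖ ≤
      ∑ k ∈ Finset.Icc n m, exp (d * ((m : ℝ) - k)) * ‖evolQ A P k n x‖ := by
    simpa using Finset.single_le_sum
      (f := fun k : ℕ => exp (d * ((m : ℝ) - k)) * ‖evolQ A P k n x‖)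
      (fun k _ => by positivity) (Finset.left_mem_Icc.2 hnm)
  rw [evolP_self] at hle
  calc exp (d * ((m : ℝ) - n)) * (‖evolP A P m n x‖ + ‖(1 - P n) x‖)
      ≤ S n * ‖P n x‖ + S m * ‖evolQ A P m n x‖ := by
        linarith [hP, hQ, hle]
    _ ≤ N n * ‖P n x‖ + N m * ‖evolQ A P m n x‖ := by
        gcongr
        exacts [hSN n, hSN m]

end Dichotomy

theorem nonuniform_exponential_dichotomy_iff_general
    {X : Type*} [NormedAddCommGroup X] [NormedSpace ℝ X]
    (A P : ℕ → X →L[ℝ] X)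
    (hProj : ∀ n, (P n).comp (P n) = P n)
    (hCompat : ∀ n, (A (n + 1)).comp (P n) = (P (n + 1)).comp (A (n + 1))) :
    IsNED A P ↔
      ∃ d : ℝ, 0 < d ∧ ∃ S : ℕ → ℝ, (∀ n, 0 < S n) ∧
        ∀ m n p : ℕ, p ≤ n → n ≤ m → ∀ x : X,
          Summable (fun j : ℕ => exp (d * j) * ‖evolP A P (n + j) p x‖) ∧
          (∑' j : ℕ, exp (d * j) * ‖evolP A P (n + j) p x‖) +
              ∑ k ∈ Finset.Icc n m, exp (d * ((m : ℝ) - k)) * ‖evolQ A P k n x‖ ≤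
            S n * ‖evolP A P n p x‖ + S m * ‖evolQ A P m n x‖ := by
  constructor
  · rintro ⟨α, hα, N, hN0, -, hN⟩
    have hr : 0 < 1 - exp (-(α / 2)) := sub_pos.2 (exp_lt_one_iff.2 (by linarith))
    exact ⟨α / 2, half_pos hα, fun n => N n / (1 - exp (-(α / 2))),
      fun n => div_pos (hN0 n) hr, fun m n p hpn _ x =>
        DichotomyBound.summable_and_sum_le hN hα (fun n => (hN0 n).le) hProj hCompat hpn x⟩
  · rintro ⟨d, hd, S, hS0, hS⟩
    obtain ⟨N, hN0, hNmono, hSN⟩ := exists_monotone_ge_of_pos hS0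
    exact ⟨d, hd, N, hN0, hNmono, dichotomyBound_of_sum_le hSN fun m n => hS m n n le_rfl⟩

/-- Theorem 1 (characterization of nonuniform exponential dichotomy). -/
theorem nonuniform_exponential_dichotomy_iff
    {X : Type*} [NormedAddCommGroup X] [NormedSpace ℝ X] [CompleteSpace X]
    (A P : ℕ → X →L[ℝ] X)
    (hProj : ∀ n, (P n).comp (P n) = P n)
    (hCompat : ∀ n, (A (n + 1)).comp (P n) = (P (n + 1)).comp (A (n + 1))) :
    IsNED A P ↔
      ∃ d : ℝ, 0 < d ∧ ∃ S : ℕ → ℝ, (∀ n, 0 < S n) ∧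
        ∀ m n p : ℕ, p ≤ n → n ≤ m → ∀ x : X,
          Summable (fun j : ℕ => exp (d * j) * ‖evolP A P (n + j) p x‖) ∧
          (∑' j : ℕ, exp (d * j) * ‖evolP A P (n + j) p x‖) +
              ∑ k ∈ Finset.Icc n m, exp (d * ((m : ℝ) - k)) * ‖evolQ A P k n x‖ ≤
            S n * ‖evolP A P n p x‖ + S m * ‖evolQ A P m n x‖ :=
  nonuniform_exponential_dichotomy_iff_general A P hProj hCompat
end

section
/- The linear discrete-time system (A) is P-uniformly exponentially dichotomic if and only if there exists a constant D > 0 such that for all natural numbers m ≥ n and all x ∈ X, the series Σ_{j=m}^{∞} ‖𝒜_P(j,n)x‖ converges and Σ_{j=m}^{∞} ‖𝒜_P(j,n)x‖ + Σ_{k=n}^{m} ‖𝒜_Q(k,n)x‖ ≤ D(‖𝒜_P(m,n)x‖ + ‖𝒜_Q(m,n)x‖). -/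
open Real

/-- The system is P-uniformly exponentially dichotomic. -/
def IsUED {X : Type*} [NormedAddCommGroup X] [NormedSpace ℝ X]
    (A P : ℕ → X →L[ℝ] X) : Prop :=
  ∃ N α : ℝ, 1 ≤ N ∧ 0 < α ∧
    ∀ m n : ℕ, n ≤ m → ∀ x : X,
      exp (α * ((m : ℝ) - n)) * (‖evolP A P m n x‖ + ‖(1 - P n) x‖) ≤
        N * (‖P n x‖ + ‖evolQ A P m n x‖)

/-!
Testing the dichotomy inequality on `P n x` and on `(1 - P n) x` splits it into the two
geometric estimates `‖𝒜_P(m,n)x‖ ≤ N q^(m-n) ‖P(n)x‖` and `‖Q(n)x‖ ≤ N q^(m-n) ‖𝒜_Q(m,n)x‖`,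
where `q = e^(-α)`. Since the ranges of `P` and `Q` are invariant under the evolution, these
estimates restart at every time `m`; so the terms of both series are dominated by geometric
sequences and `D = N / (1 - q)` works. Conversely, the series bound forces the tails of the first
series to decay, and the partial sums of the second to grow, geometrically with ratio
`1 - 1/D` (after enlarging `D` to `D + 1` so that this ratio is positive).
-/

open Finset

section Geometric

lemma summable_and_tsum_le_of_le_geometric {f : ℕ → ℝ} {C q : ℝ} (hq0 : 0 ≤ q) (hq1 : q < 1)
    (hf0 : ∀ j, 0 ≤ f j) (hf : ∀ j, f j ≤ C * q ^ j) :
    Summable f ∧ ∑' j, f j ≤ C / (1 - q) := by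
  have hgeom : Summable fun j ↦ C * q ^ j := (summable_geometric_of_lt_one hq0 hq1).mul_left C
  have hsum : Summable f := hgeom.of_nonneg_of_le hf0 hf
  refine ⟨hsum, (hsum.tsum_le_tsum hf hgeom).trans_eq ?_⟩
  rw [tsum_mul_left, tsum_geometric_of_lt_one hq0 hq1, div_eq_mul_inv]

lemma sum_Icc_pow_sub_le {q : ℝ} (hq0 : 0 ≤ q) (hq1 : q < 1) (n m : ℕ) :
    ∑ k ∈ Icc n m, q ^ (m - k) ≤ 1 / (1 - q) := by
  rw [← Ico_add_one_right_eq_Icc, sum_Ico_reflect _ _ le_rfl, Nat.sub_self]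
  simpa using geom_sum_Ico_le_of_lt_one (m := 0) (n := m + 1 - n) hq0 hq1

/-- Writing `S k = ∑' j, f (k + j)`, the bound `S k ≤ E f k` turns `S (k + 1) = S k - f k` into
`S (k + 1) ≤ (1 - E⁻¹) S k`. -/
lemma le_mul_pow_of_tsum_tail_le {f : ℕ → ℝ} {E : ℝ} {n : ℕ} (hE : 1 ≤ E) (hf0 : ∀ k, 0 ≤ f k)
    (htail : ∀ k, n ≤ k → Summable (fun j ↦ f (k + j)) ∧ ∑' j, f (k + j) ≤ E * f k)
    {m : ℕ} (hnm : n ≤ m) : f m ≤ E * (1 - E⁻¹) ^ (m - n) * f n := by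
  set S : ℕ → ℝ := fun k ↦ ∑' j, f (k + j)
  have hq : 0 ≤ 1 - E⁻¹ := sub_nonneg.2 (inv_le_one_of_one_le₀ hE)
  have hstep : ∀ k, n ≤ k → S (k + 1) ≤ (1 - E⁻¹) * S k := by
    intro k hk
    have hsplit : S k = f k + S (k + 1) := by
      simp only [S, (htail k hk).1.tsum_eq_zero_add, add_zero, add_assoc, add_comm 1]
    have : E⁻¹ * S k ≤ f k := by
      rw [inv_mul_le_iff₀ (by linarith)]; exact (htail k hk).2
    linarith
  have hiter : ∀ k, n ≤ k → S k ≤ (1 - E⁻¹) ^ (k - n) * S n := by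
    intro k hk
    induction k, hk using Nat.le_induction with
    | base => simp
    | succ k hk ih =>
      rw [Nat.sub_add_comm hk, pow_succ', mul_assoc]
      exact (hstep k hk).trans (mul_le_mul_of_nonneg_left ih hq)
  calc f m ≤ S m := by
        simpa using (htail m hnm).1.le_tsum 0 fun j _ ↦ hf0 (m + j)
    _ ≤ (1 - E⁻¹) ^ (m - n) * S n := hiter m hnm
    _ ≤ (1 - E⁻¹) ^ (m - n) * (E * f n) := by
        gcongr
        exact (htail n le_rfl).2
    _ = E * (1 - E⁻¹) ^ (m - n) * f n := by ring

/-- Writing `T k = ∑ i ∈ Icc n k, g i`, the bound `T k ≤ E g k` turns `T k = T (k + 1) - g (k + 1)`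
into `T k ≤ (1 - E⁻¹) T (k + 1)`. -/
lemma le_mul_pow_of_sum_Icc_le {g : ℕ → ℝ} {E : ℝ} {n : ℕ} (hE : 1 ≤ E)
    (hsum : ∀ k, n ≤ k → ∑ i ∈ Icc n k, g i ≤ E * g k) {m : ℕ} (hnm : n ≤ m) :
    g n ≤ E * (1 - E⁻¹) ^ (m - n) * g m := by
  set T : ℕ → ℝ := fun k ↦ ∑ i ∈ Icc n k, g i
  have hq : 0 ≤ 1 - E⁻¹ := sub_nonneg.2 (inv_le_one_of_one_le₀ hE)
  have hstep : ∀ k, n ≤ k → T k ≤ (1 - E⁻¹) * T (k + 1) := by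
    intro k hk
    have hsplit : T (k + 1) = T k + g (k + 1) := sum_Icc_succ_top (by omega) g
    have : E⁻¹ * T (k + 1) ≤ g (k + 1) := by
      rw [inv_mul_le_iff₀ (by linarith)]; exact hsum (k + 1) (by omega)
    linarith
  have hiter : ∀ k, n ≤ k → T n ≤ (1 - E⁻¹) ^ (k - n) * T k := by
    intro k hk
    induction k, hk using Nat.le_induction with
    | base => simp
    | succ k hk ih =>
      rw [Nat.sub_add_comm hk, pow_succ, mul_assoc]
      exact ih.trans (mul_le_mul_of_nonneg_left (hstep k hk) (pow_nonneg hq _))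
  calc g n = T n := by simp [T]
    _ ≤ (1 - E⁻¹) ^ (m - n) * T m := hiter m hnm
    _ ≤ (1 - E⁻¹) ^ (m - n) * (E * g m) := by
        gcongr
        exact hsum m hnm
    _ = E * (1 - E⁻¹) ^ (m - n) * g m := by ring

end Geometric

section Dichotomy

variable {X : Type*} [NormedAddCommGroup X] [NormedSpace ℝ X]

lemma IsIdempotentElem.clm_apply_apply {p : X →L[ℝ] X} (hp : IsIdempotentElem p) (x : X) :
    p (p x) = p x :=
  congr($hp x)

section Evolution

variable {A P : ℕ → X →L[ℝ] X}

lemma evol_self_apply (A : ℕ → X →L[ℝ] X) (n : ℕ) (x : X) : evol A n n x = x := by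
  simp [evol, evolFrom]

lemma evol_succ_apply {m n : ℕ} (h : n ≤ m) (x : X) :
    evol A (m + 1) n x = A (m + 1) (evol A m n x) := by
  rw [evol, evol, Nat.sub_add_comm h, evolFrom, Nat.add_sub_cancel' h]
  rfl

lemma evol_evol_apply {k m n : ℕ} (hnm : n ≤ m) (hmk : m ≤ k) (x : X) :
    evol A k m (evol A m n x) = evol A k n x := by
  induction k, hmk using Nat.le_induction with
  | base => rw [evol_self_apply]
  | succ k hmk ih => rw [evol_succ_apply hmk, evol_succ_apply (hnm.trans hmk), ih]

lemma proj_evol_apply (hCompat : ∀ n, (A (n + 1)).comp (P n) = (P (n + 1)).comp (A (n + 1)))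
    {m n : ℕ} (h : n ≤ m) (x : X) : P m (evol A m n x) = evol A m n (P n x) := by
  induction m, h using Nat.le_induction with
  | base => simp only [evol_self_apply]
  | succ m hnm ih =>
    rw [evol_succ_apply hnm, evol_succ_apply hnm, ← ih, ← ContinuousLinearMap.comp_apply, ← hCompat]
    rfl

variable (hProj : ∀ n, IsIdempotentElem (P n))
  (hCompat : ∀ n, (A (n + 1)).comp (P n) = (P (n + 1)).comp (A (n + 1)))
include hProj hCompat

lemma proj_evolP_apply {m n : ℕ} (h : n ≤ m) (x : X) : P m (evolP A P m n x) = evolP A P m n x := by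
  simp [evolP, proj_evol_apply hCompat h, (hProj n).clm_apply_apply]

lemma proj_evolQ_apply {m n : ℕ} (h : n ≤ m) (x : X) : P m (evolQ A P m n x) = 0 := by
  simp [evolQ, proj_evol_apply hCompat h, (hProj n).clm_apply_apply]

lemma evolP_evolP_apply {k m n : ℕ} (hnm : n ≤ m) (hmk : m ≤ k) (x : X) :
    evolP A P k m (evolP A P m n x) = evolP A P k n x := by
  rw [evolP, ContinuousLinearMap.comp_apply, proj_evolP_apply hProj hCompat hnm]
  exact evol_evol_apply hnm hmk _

lemma evolQ_evolQ_apply {k m n : ℕ} (hnm : n ≤ m) (hmk : m ≤ k) (x : X) :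
    evolQ A P k m (evolQ A P m n x) = evolQ A P k n x := by
  have hvanish := proj_evolQ_apply hProj hCompat hnm x
  simp only [evolQ, ContinuousLinearMap.comp_apply, sub_apply,
    one_apply_eq_self] at hvanish ⊢
  rw [hvanish, sub_zero, evol_evol_apply hnm hmk]

end Evolution

def HasGeometricDichotomy (A P : ℕ → X →L[ℝ] X) (N q : ℝ) : Prop :=
  ∀ m n : ℕ, n ≤ m → ∀ x : X,
    ‖evolP A P m n x‖ ≤ N * q ^ (m - n) * ‖P n x‖ ∧
      ‖(1 - P n) x‖ ≤ N * q ^ (m - n) * ‖evolQ A P m n x‖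

def HasSeriesBound (A P : ℕ → X →L[ℝ] X) (D : ℝ) : Prop :=
  ∀ m n : ℕ, n ≤ m → ∀ x : X,
    Summable (fun j : ℕ => ‖evolP A P (m + j) n x‖) ∧
      (∑' j : ℕ, ‖evolP A P (m + j) n x‖) + ∑ k ∈ Icc n m, ‖evolQ A P k n x‖ ≤
        D * (‖evolP A P m n x‖ + ‖evolQ A P m n x‖)

lemma exp_neg_log_mul_sub {q : ℝ} (hq : 0 < q) {m n : ℕ} (h : n ≤ m) :
    exp (-log q * ((m : ℝ) - n)) = (q ^ (m - n))⁻¹ := by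
  rw [← Nat.cast_sub h, mul_comm, exp_nat_mul, exp_neg, exp_log hq, inv_pow]

variable {A P : ℕ → X →L[ℝ] X}

lemma isUED_iff_exists_hasGeometricDichotomy (hProj : ∀ n, IsIdempotentElem (P n)) :
    IsUED A P ↔ ∃ N q : ℝ, 1 ≤ N ∧ 0 < q ∧ q < 1 ∧ HasGeometricDichotomy A P N q := by
  constructor
  · rintro ⟨N, α, hN, hα, hUED⟩
    refine ⟨N, exp (-α), hN, exp_pos _, exp_lt_one_iff.2 (neg_lt_zero.2 hα), fun m n hnm x ↦ ?_⟩
    have hexp : exp (α * ((m : ℝ) - n)) = (exp (-α) ^ (m - n))⁻¹ := by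
      rw [← exp_neg_log_mul_sub (exp_pos _) hnm, log_exp, neg_neg]
    have hPx := hUED m n hnm (P n x)
    have hQx := hUED m n hnm ((1 - P n) x)
    simp only [evolP, evolQ, ContinuousLinearMap.comp_apply, sub_apply, one_apply_eq_self, map_sub,
      (hProj n).clm_apply_apply, sub_self, sub_zero, map_zero, norm_zero, add_zero, zero_add,
      hexp] at hPx hQx ⊢
    rw [inv_mul_le_iff₀ (pow_pos (exp_pos _) _)] at hPx hQx
    constructor <;> linarith
  · rintro ⟨N, q, hN, hq0, hq1, hgeo⟩
    refine ⟨N, -log q, hN, neg_pos.2 (log_neg hq0 hq1), fun m n hnm x ↦ ?_⟩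
    rw [exp_neg_log_mul_sub hq0 hnm, inv_mul_le_iff₀ (pow_pos hq0 _)]
    obtain ⟨hP, hQ⟩ := hgeo m n hnm x
    linarith

section Forward

variable {N q : ℝ} (hProj : ∀ n, IsIdempotentElem (P n))
  (hCompat : ∀ n, (A (n + 1)).comp (P n) = (P (n + 1)).comp (A (n + 1)))
include hProj hCompat

lemma HasGeometricDichotomy.norm_evolP_add_le (h : HasGeometricDichotomy A P N q) {m n : ℕ}
    (hnm : n ≤ m) (j : ℕ) (x : X) : ‖evolP A P (m + j) n x‖ ≤ N * q ^ j * ‖evolP A P m n x‖ := by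
  have := (h (m + j) m (Nat.le_add_right m j) (evolP A P m n x)).1
  rwa [evolP_evolP_apply hProj hCompat hnm (Nat.le_add_right m j),
    proj_evolP_apply hProj hCompat hnm, Nat.add_sub_cancel_left] at this

lemma HasGeometricDichotomy.norm_evolQ_le (h : HasGeometricDichotomy A P N q) {k m n : ℕ}
    (hnk : n ≤ k) (hkm : k ≤ m) (x : X) :
    ‖evolQ A P k n x‖ ≤ N * q ^ (m - k) * ‖evolQ A P m n x‖ := by
  simpa [proj_evolQ_apply hProj hCompat hnk, evolQ_evolQ_apply hProj hCompat hnk hkm] using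
    (h m k hkm (evolQ A P k n x)).2

lemma HasGeometricDichotomy.hasSeriesBound (h : HasGeometricDichotomy A P N q) (hN : 0 ≤ N)
    (hq0 : 0 ≤ q) (hq1 : q < 1) : HasSeriesBound A P (N / (1 - q)) := by
  intro m n hnm x
  obtain ⟨hsum, htsum⟩ := summable_and_tsum_le_of_le_geometric hq0 hq1 (fun j ↦ norm_nonneg _)
    fun j ↦ (h.norm_evolP_add_le hProj hCompat hnm j x).trans_eq (mul_right_comm _ _ _)
  have hQ : ∑ k ∈ Icc n m, ‖evolQ A P k n x‖ ≤ N / (1 - q) * ‖evolQ A P m n x‖ :=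
    calc ∑ k ∈ Icc n m, ‖evolQ A P k n x‖
        ≤ ∑ k ∈ Icc n m, N * ‖evolQ A P m n x‖ * q ^ (m - k) := by
          refine sum_le_sum fun k hk ↦ ?_
          obtain ⟨hnk, hkm⟩ := mem_Icc.1 hk
          exact (h.norm_evolQ_le hProj hCompat hnk hkm x).trans_eq (by ring)
      _ = N * ‖evolQ A P m n x‖ * ∑ k ∈ Icc n m, q ^ (m - k) := (mul_sum ..).symm
      _ ≤ N * ‖evolQ A P m n x‖ * (1 / (1 - q)) := by
          gcongr
          exact sum_Icc_pow_sub_le hq0 hq1 n m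
      _ = N / (1 - q) * ‖evolQ A P m n x‖ := by ring
  exact ⟨hsum, by rw [mul_add]; exact add_le_add (htsum.trans_eq (by ring)) hQ⟩

end Forward

lemma HasSeriesBound.mono {D E : ℝ} (h : HasSeriesBound A P D) (hDE : D ≤ E) :
    HasSeriesBound A P E := fun m n hnm x ↦
  ⟨(h m n hnm x).1, (h m n hnm x).2.trans (by gcongr)⟩

lemma HasSeriesBound.hasGeometricDichotomy (hProj : ∀ n, IsIdempotentElem (P n)) {E : ℝ}
    (h : HasSeriesBound A P E) (hE : 1 ≤ E) : HasGeometricDichotomy A P E (1 - E⁻¹) := by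
  intro m n hnm x
  constructor
  · refine (le_mul_pow_of_tsum_tail_le (f := fun j ↦ ‖evolP A P j n x‖) hE (fun _ ↦ norm_nonneg _)
      (fun k hk ↦ ?_) hnm).trans_eq ?_
    · simpa [evolP, evolQ, (hProj n).clm_apply_apply] using h k n hk (P n x)
    · simp [evolP, evol_self_apply]
  · refine (le_mul_pow_of_sum_Icc_le (g := fun i ↦ ‖evolQ A P i n x‖) hE (fun k hk ↦ ?_)
      hnm).trans_eq' ?_
    · simpa [evolP, evolQ, (hProj n).clm_apply_apply] using h k n hk ((1 - P n) x)
    · simp [evolQ, evol_self_apply]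

end Dichotomy

theorem uniform_exponential_dichotomy_iff_series_general
    {X : Type*} [NormedAddCommGroup X] [NormedSpace ℝ X]
    (A P : ℕ → X →L[ℝ] X)
    (hProj : ∀ n, (P n).comp (P n) = P n)
    (hCompat : ∀ n, (A (n + 1)).comp (P n) = (P (n + 1)).comp (A (n + 1))) :
    IsUED A P ↔
      ∃ D : ℝ, 0 < D ∧
        ∀ m n : ℕ, n ≤ m → ∀ x : X,
          Summable (fun j : ℕ => ‖evolP A P (m + j) n x‖) ∧
          (∑' j : ℕ, ‖evolP A P (m + j) n x‖) +
              ∑ k ∈ Finset.Icc n m, ‖evolQ A P k n x‖ ≤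
            D * (‖evolP A P m n x‖ + ‖evolQ A P m n x‖) := by
  rw [isUED_iff_exists_hasGeometricDichotomy hProj]
  constructor
  · rintro ⟨N, q, hN, hq0, hq1, hgeo⟩
    have : 0 < 1 - q := sub_pos.2 hq1
    exact ⟨N / (1 - q), by positivity,
      hgeo.hasSeriesBound hProj hCompat (by linarith) hq0.le hq1⟩
  · rintro ⟨D, hD, hseries⟩
    have hE : 1 < D + 1 := by linarith
    exact ⟨D + 1, 1 - (D + 1)⁻¹, hE.le, sub_pos.2 (inv_lt_one_of_one_lt₀ hE),
      sub_lt_self _ (by positivity),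
      HasSeriesBound.hasGeometricDichotomy hProj (HasSeriesBound.mono hseries (by linarith)) hE.le⟩

/-- Corollary (second characterization of uniform exponential dichotomy). -/
theorem uniform_exponential_dichotomy_iff_series
    {X : Type*} [NormedAddCommGroup X] [NormedSpace ℝ X] [CompleteSpace X]
    (A P : ℕ → X →L[ℝ] X)
    (hProj : ∀ n, (P n).comp (P n) = P n)
    (hCompat : ∀ n, (A (n + 1)).comp (P n) = (P (n + 1)).comp (A (n + 1))) :
    IsUED A P ↔
      ∃ D : ℝ, 0 < D ∧
        ∀ m n : ℕ, n ≤ m → ∀ x : X,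
          Summable (fun j : ℕ => ‖evolP A P (m + j) n x‖) ∧
          (∑' j : ℕ, ‖evolP A P (m + j) n x‖) +
              ∑ k ∈ Finset.Icc n m, ‖evolQ A P k n x‖ ≤
            D * (‖evolP A P m n x‖ + ‖evolQ A P m n x‖) :=
  uniform_exponential_dichotomy_iff_series_general A P hProj hCompat
end

section
/- The linear discrete-time system (A) is P-uniformly exponentially dichotomic if and only if there exist constants N ≥ 1 and α > 0 such that e^{α(m−n)}(‖𝒜_P(m,p)x‖ + ‖𝒜_Q(n,p)x‖) ≤ N(‖𝒜_P(n,p)x‖ + ‖𝒜_Q(m,p)x‖) for all natural numbers m ≥ n ≥ p and all x ∈ X. -/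
open Real

/-- Remark: three-index characterization of uniform exponential dichotomy. -/
theorem uniform_exponential_dichotomy_iff_three_indices
    {X : Type*} [NormedAddCommGroup X] [NormedSpace ℝ X] [CompleteSpace X]
    (A P : ℕ → X →L[ℝ] X)
    (hProj : ∀ n, (P n).comp (P n) = P n)
    (hCompat : ∀ n, (A (n + 1)).comp (P n) = (P (n + 1)).comp (A (n + 1))) :
    IsUED A P ↔
      ∃ N α : ℝ, 1 ≤ N ∧ 0 < α ∧
        ∀ m n p : ℕ, p ≤ n → n ≤ m → ∀ x : X,
          exp (α * ((m : ℝ) - n)) * (‖evolP A P m p x‖ + ‖evolQ A P n p x‖) ≤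
            N * (‖evolP A P n p x‖ + ‖evolQ A P m p x‖) := by
  clear hProj
  -- semigroup property
  have hadd : ∀ p k j, evolFrom A p (k + j) = (evolFrom A (p + k) j).comp (evolFrom A p k) := by
    intro p k j
    induction j with
    | zero => simp [evolFrom, ContinuousLinearMap.one_def, ContinuousLinearMap.id_comp]
    | succ j ih =>
        have h1 : k + (j + 1) = (k + j) + 1 := by omega
        have h2 : p + (k + j) + 1 = (p + k) + j + 1 := by omega
        rw [h1]
        show (A (p + (k + j) + 1)).comp (evolFrom A p (k + j)) = _
        rw [ih, h2]
        show _ = ((A ((p + k) + j + 1)).comp (evolFrom A (p + k) j)).comp (evolFrom A p k)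
        rw [ContinuousLinearMap.comp_assoc]
  -- commutation with P
  have hcomm : ∀ p k, (P (p + k)).comp (evolFrom A p k) = (evolFrom A p k).comp (P p) := by
    intro p k
    induction k with
    | zero => simp [evolFrom, ContinuousLinearMap.one_def, ContinuousLinearMap.id_comp, ContinuousLinearMap.comp_id]
    | succ k ih =>
        show (P (p + k + 1)).comp ((A (p + k + 1)).comp (evolFrom A p k)) = _
        rw [← ContinuousLinearMap.comp_assoc, ← hCompat (p + k),
          ContinuousLinearMap.comp_assoc, ih, ← ContinuousLinearMap.comp_assoc]
        rfl
  constructor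
  · rintro ⟨N, α, hN, hα, h⟩
    refine ⟨N, α, hN, hα, ?_⟩
    intro m n p hpn hnm x
    obtain ⟨k, rfl⟩ : ∃ k, n = p + k := ⟨n - p, by omega⟩
    obtain ⟨j, rfl⟩ : ∃ j, m = p + k + j := ⟨m - (p + k), by omega⟩
    set y := evolFrom A p k x with hy
    have e0 : evol A (p + k) p = evolFrom A p k := by simp [evol]
    have e1 : evol A (p + k + j) p = (evolFrom A (p + k) j).comp (evolFrom A p k) := by
      have : p + k + j - p = k + j := by omega
      rw [evol, this, hadd]
    have e2 : evol A (p + k + j) (p + k) = evolFrom A (p + k) j := by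
      simp [evol]
    have hPy : P (p + k) y = evolP A P (p + k) p x := by
      simp only [evolP, e0, hy, ContinuousLinearMap.comp_apply]
      have := congrFun (congrArg DFunLike.coe (hcomm p k)) x
      simp only [ContinuousLinearMap.comp_apply] at this
      rw [this]
    have hQy : (1 - P (p + k)) y = evolQ A P (p + k) p x := by
      simp only [evolQ, e0, hy, ContinuousLinearMap.comp_apply,
        ContinuousLinearMap.sub_apply, ContinuousLinearMap.one_apply, map_sub]
      have := congrFun (congrArg DFunLike.coe (hcomm p k)) x
      simp only [ContinuousLinearMap.comp_apply] at this
      rw [this]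
    have hPmy : evolP A P (p + k + j) (p + k) y = evolP A P (p + k + j) p x := by
      simp only [evolP, e1, e2, hy, ContinuousLinearMap.comp_apply]
      congr 1
      exact congrFun (congrArg DFunLike.coe (hcomm p k)) x
    have hQmy : evolQ A P (p + k + j) (p + k) y = evolQ A P (p + k + j) p x := by
      simp only [evolQ, e1, e2, hy, ContinuousLinearMap.comp_apply,
        ContinuousLinearMap.sub_apply, ContinuousLinearMap.one_apply, map_sub]
      congr 1
      have := congrFun (congrArg DFunLike.coe (hcomm p k)) x
      simp only [ContinuousLinearMap.comp_apply] at this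
      rw [this]
    have := h (p + k + j) (p + k) (by omega) y
    rw [hPy, hQy, hPmy, hQmy] at this
    convert this using 3 <;> push_cast <;> ring
  · rintro ⟨N, α, hN, hα, h⟩
    refine ⟨N, α, hN, hα, ?_⟩
    intro m n hnm x
    have := h m n n le_rfl hnm x
    have hP : evolP A P n n x = P n x := by
      simp [evolP, evol, evolFrom]
    have hQ : evolQ A P n n x = (1 - P n) x := by
      simp [evolQ, evol, evolFrom]
    rw [hP, hQ] at this
    exact this
end

section
/- The linear discrete-time system (A) is P-nonuniformly exponentially dichotomic if and only if there exist a constant α > 0 and a nondecreasing sequence N : ℕ → (0,∞) such that e^{α(m−n)}(‖𝒜_P(m,p)x‖ + ‖𝒜_Q(n,p)x‖) ≤ N(n)‖𝒜_P(n,p)x‖ + N(m)‖𝒜_Q(m,p)x‖ for all natural numbers m ≥ n ≥ p and all x ∈ X. -/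
open Real

lemma evolFrom_add {X : Type*} [NormedAddCommGroup X] [NormedSpace ℝ X]
    (A : ℕ → X →L[ℝ] X) (p k : ℕ) : ∀ j : ℕ,
    evolFrom A p (k + j) = (evolFrom A (p + k) j).comp (evolFrom A p k)
  | 0 => by simp [evolFrom, ContinuousLinearMap.one_def]
  | j + 1 => by
    rw [show k + (j + 1) = (k + j) + 1 from rfl]
    simp only [evolFrom, evolFrom_add A p k j, ContinuousLinearMap.comp_assoc,
      add_assoc]

lemma evol_evol {X : Type*} [NormedAddCommGroup X] [NormedSpace ℝ X]
    (A : ℕ → X →L[ℝ] X) {m n p : ℕ} (h1 : p ≤ n) (h2 : n ≤ m) (x : X) :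
    evol A m n (evol A n p x) = evol A m p x := by
  obtain ⟨k, rfl⟩ := Nat.exists_eq_add_of_le h1
  obtain ⟨j, rfl⟩ := Nat.exists_eq_add_of_le h2
  have : evol A (p + k + j) p = evol A (p + k + j) (p + k) ∘L evol A (p + k) p := by
    simp only [evol, Nat.add_sub_cancel_left, Nat.add_sub_cancel,
      show p + k + j - p = k + j by omega]
    exact evolFrom_add A p k j
  rw [this]; rfl

lemma evol_P_comm {X : Type*} [NormedAddCommGroup X] [NormedSpace ℝ X]
    (A P : ℕ → X →L[ℝ] X)
    (hCompat : ∀ n, (A (n + 1)).comp (P n) = (P (n + 1)).comp (A (n + 1)))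
    {n p : ℕ} (h : p ≤ n) (x : X) :
    P n (evol A n p x) = evol A n p (P p x) := by
  obtain ⟨k, rfl⟩ := Nat.exists_eq_add_of_le h
  have key : ∀ k : ℕ, (P (p + k)).comp (evolFrom A p k) = (evolFrom A p k).comp (P p) := by
    intro k
    induction k with
    | zero => simp [evolFrom, ContinuousLinearMap.one_def]
    | succ k ih =>
      show (P (p + k + 1)).comp _ = _
      simp only [evolFrom, ← ContinuousLinearMap.comp_assoc, ← hCompat (p + k)]
      rw [ContinuousLinearMap.comp_assoc, ih, ContinuousLinearMap.comp_assoc]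
  have := congrFun (congrArg DFunLike.coe (key k)) x
  simpa [evol, Nat.add_sub_cancel_left] using this

/-- Remark: three-index characterization of nonuniform exponential dichotomy. -/
theorem nonuniform_exponential_dichotomy_iff_three_indices
    {X : Type*} [NormedAddCommGroup X] [NormedSpace ℝ X] [CompleteSpace X]
    (A P : ℕ → X →L[ℝ] X)
    (hProj : ∀ n, (P n).comp (P n) = P n)
    (hCompat : ∀ n, (A (n + 1)).comp (P n) = (P (n + 1)).comp (A (n + 1))) :
    IsNED A P ↔
      ∃ α : ℝ, 0 < α ∧ ∃ N : ℕ → ℝ, (∀ n, 0 < N n) ∧ Monotone N ∧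
        ∀ m n p : ℕ, p ≤ n → n ≤ m → ∀ x : X,
          exp (α * ((m : ℝ) - n)) * (‖evolP A P m p x‖ + ‖evolQ A P n p x‖) ≤
            N n * ‖evolP A P n p x‖ + N m * ‖evolQ A P m p x‖ := by
  constructor
  · rintro ⟨α, hα, N, hN, hMono, h⟩
    refine ⟨α, hα, N, hN, hMono, ?_⟩
    intro m n p hpn hnm x
    have key := h m n hnm (evol A n p x)
    have e3 : P n (evol A n p x) = evolP A P n p x :=
      evol_P_comm A P hCompat hpn x
    have e2 : (1 - P n) (evol A n p x) = evolQ A P n p x := by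
      simp only [evolQ, ContinuousLinearMap.coe_comp', Function.comp_apply,
        ContinuousLinearMap.sub_apply, ContinuousLinearMap.one_apply, map_sub,
        evol_P_comm A P hCompat hpn x]
    have e1 : evolP A P m n (evol A n p x) = evolP A P m p x := by
      simp only [evolP, ContinuousLinearMap.coe_comp', Function.comp_apply,
        evol_P_comm A P hCompat hpn x, evol_evol A hpn hnm]
    have e4 : evolQ A P m n (evol A n p x) = evolQ A P m p x := by
      simp only [evolQ, ContinuousLinearMap.coe_comp', Function.comp_apply,
        ContinuousLinearMap.sub_apply, ContinuousLinearMap.one_apply, map_sub,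
        evol_P_comm A P hCompat hpn x, ← map_sub, evol_evol A hpn hnm]
    rw [e1, e2, e3, e4] at key
    exact key
  · rintro ⟨α, hα, N, hN, hMono, h⟩
    refine ⟨α, hα, N, hN, hMono, ?_⟩
    intro m n hnm x
    have key := h m n n le_rfl hnm x
    have hev : evol A n n = (1 : X →L[ℝ] X) := by
      simp [evol, evolFrom]
    simp only [evolP, evolQ, hev, ContinuousLinearMap.one_def,
      ContinuousLinearMap.id_comp] at key
    exact key
end

section
/- Let b ∈ (0,1) and c > 0, and consider the system on X = ℝ² given by A(n)(x₁,x₂) = (b a_n x₁, x₂/b), where a_n = 1/(n+2)^c if n is even and a_n = (n+1)^c if n is odd, with projections P(n)(x₁,x₂) = (x₁,0). Then the system is P-nonuniformly exponentially dichotomic; more precisely, with α = −ln b and the nondecreasing sequence N(n) = (n+2)^c one has e^{α(m−n)}(‖𝒜_P(m,n)x‖ + ‖Q(n)x‖) ≤ N(n)‖P(n)x‖ + N(m)‖𝒜_Q(m,n)x‖ for all m ≥ n and all x ∈ ℝ². -/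
open Real

/-- The diagonal operator `(x₁, x₂) ↦ (u x₁, v x₂)` on `ℝ²`. -/
noncomputable def diagCLM (u v : ℝ) : ℝ × ℝ →L[ℝ] ℝ × ℝ :=
  (u • ContinuousLinearMap.fst ℝ ℝ ℝ).prod (v • ContinuousLinearMap.snd ℝ ℝ ℝ)

/-- The family of projections `P(n)(x₁, x₂) = (x₁, 0)` on `ℝ²`. -/
noncomputable def projFst : ℕ → (ℝ × ℝ →L[ℝ] ℝ × ℝ) :=
  fun _ => (ContinuousLinearMap.fst ℝ ℝ ℝ).prod 0

/-! The evolution of a diagonal system is diagonal: here `𝒜(n+k,n)` has diagonal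
`(b^k a_{n+1} ⋯ a_{n+k}, b^{-k})`. Since `e^{αk} = b^{-k}`, the dichotomy inequality splits
into `a_{n+1} ⋯ a_{n+k} ≤ (n+2)^c` on the first axis and `1 ≤ (n+k+2)^c` on the second.
The partial products `a_0 ⋯ a_{n-1}` telescope to `1` for even `n` and to `(n+1)^{-c}` for
odd `n`, so they lie in `[(n+1)^{-c}, 1]`, and the block product `a_{n+1} ⋯ a_{n+k}`, a quotient
of two of them, is at most `(n+2)^c`. -/

open Finset

lemma diagCLM_apply (u v : ℝ) (x : ℝ × ℝ) : diagCLM u v x = (u * x.1, v * x.2) := rfl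

lemma diagCLM_comp_diagCLM (u v u' v' : ℝ) :
    (diagCLM u v).comp (diagCLM u' v') = diagCLM (u * u') (v * v') := by
  ext <;> simp [diagCLM_apply]

lemma diagCLM_one : diagCLM 1 1 = 1 := by
  ext <;> simp [diagCLM_apply]

lemma evolFrom_eq_diagCLM {u v : ℕ → ℝ} {A : ℕ → ℝ × ℝ →L[ℝ] ℝ × ℝ}
    (hA : ∀ n, A n = diagCLM (u n) (v n)) (n k : ℕ) :
    evolFrom A n k =
      diagCLM (∏ j ∈ range k, u (n + j + 1)) (∏ j ∈ range k, v (n + j + 1)) := by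
  induction k with
  | zero => simp [evolFrom, diagCLM_one]
  | succ k ih =>
    rw [evolFrom, ih, hA, diagCLM_comp_diagCLM, prod_range_succ, prod_range_succ,
      mul_comm (u _), mul_comm (v _)]

lemma Prod.norm_mk_zero {E F : Type*} [SeminormedAddGroup E] [SeminormedAddGroup F] (x : E) :
    ‖((x, 0) : E × F)‖ = ‖x‖ := by
  rw [Prod.norm_mk, norm_zero, max_eq_left (norm_nonneg x)]

lemma Prod.norm_zero_mk {E F : Type*} [SeminormedAddGroup E] [SeminormedAddGroup F] (y : F) :
    ‖((0, y) : E × F)‖ = ‖y‖ := by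
  rw [Prod.norm_mk, norm_zero, max_eq_right (norm_nonneg y)]

lemma projFst_apply (n : ℕ) (x : ℝ × ℝ) : projFst n x = (x.1, 0) := rfl

lemma one_sub_projFst_apply (n : ℕ) (x : ℝ × ℝ) : (1 - projFst n) x = (0, x.2) := by
  ext <;> simp [projFst_apply]

section DiagonalSystem

variable {u v : ℕ → ℝ} {A : ℕ → ℝ × ℝ →L[ℝ] ℝ × ℝ}

lemma norm_evolP_projFst_of_diagCLM (hA : ∀ n, A n = diagCLM (u n) (v n)) (m n : ℕ)
    (x : ℝ × ℝ) :
    ‖evolP A projFst m n x‖ = |∏ j ∈ range (m - n), u (n + j + 1)| * |x.1| := by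
  rw [evolP, ContinuousLinearMap.comp_apply, evol, evolFrom_eq_diagCLM hA, projFst_apply,
    diagCLM_apply, mul_zero, Prod.norm_mk_zero, Real.norm_eq_abs, abs_mul]

lemma norm_evolQ_projFst_of_diagCLM (hA : ∀ n, A n = diagCLM (u n) (v n)) (m n : ℕ)
    (x : ℝ × ℝ) :
    ‖evolQ A projFst m n x‖ = |∏ j ∈ range (m - n), v (n + j + 1)| * |x.2| := by
  rw [evolQ, ContinuousLinearMap.comp_apply, evol, evolFrom_eq_diagCLM hA,
    one_sub_projFst_apply, diagCLM_apply, mul_zero, Prod.norm_zero_mk, Real.norm_eq_abs, abs_mul]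

theorem dichotomy_ineq_of_diagCLM (hA : ∀ n, A n = diagCLM (u n) (v n)) {α : ℝ} {N : ℕ → ℝ}
    (hu : ∀ n k : ℕ, exp (α * k) * |∏ j ∈ range k, u (n + j + 1)| ≤ N n)
    (hv : ∀ n k : ℕ, exp (α * k) ≤ N (n + k) * |∏ j ∈ range k, v (n + j + 1)|)
    (m n : ℕ) (hnm : n ≤ m) (x : ℝ × ℝ) :
    exp (α * ((m : ℝ) - n)) * (‖evolP A projFst m n x‖ + ‖(1 - projFst n) x‖) ≤
      N n * ‖projFst n x‖ + N m * ‖evolQ A projFst m n x‖ := by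
  obtain ⟨k, rfl⟩ := Nat.exists_eq_add_of_le hnm
  have hk : ((n + k : ℕ) : ℝ) - n = k := by push_cast; ring
  simp only [norm_evolP_projFst_of_diagCLM hA, norm_evolQ_projFst_of_diagCLM hA,
    projFst_apply, one_sub_projFst_apply, Nat.add_sub_cancel_left, hk]
  rw [Prod.norm_mk_zero, Prod.norm_zero_mk, Real.norm_eq_abs, Real.norm_eq_abs, mul_add,
    ← mul_assoc, ← mul_assoc]
  exact add_le_add (mul_le_mul_of_nonneg_right (hu n k) (abs_nonneg _))
    (mul_le_mul_of_nonneg_right (hv n k) (abs_nonneg _))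

end DiagonalSystem

noncomputable def altPowWeight (c : ℝ) (n : ℕ) : ℝ :=
  if Even n then (((n : ℝ) + 2) ^ c)⁻¹ else ((n : ℝ) + 1) ^ c

section altPowWeight

variable {c : ℝ}

lemma altPowWeight_pos (n : ℕ) : 0 < altPowWeight c n := by
  rw [altPowWeight]; split_ifs <;> positivity

lemma prod_range_altPowWeight (n : ℕ) :
    ∏ j ∈ range n, altPowWeight c j = if Even n then 1 else ((n : ℝ) + 1) ^ (-c) := by
  induction n with
  | zero => simp
  | succ n ih =>
    have hpos : (0 : ℝ) < n + 2 := by positivity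
    rw [prod_range_succ, ih, altPowWeight]
    rcases Nat.even_or_odd n with hn | hn
    · rw [if_pos hn, if_pos hn, if_neg (Nat.not_even_iff_odd.mpr hn.add_one), one_mul,
        Nat.cast_succ, add_assoc, one_add_one_eq_two, Real.rpow_neg hpos.le]
    · rw [if_neg (Nat.not_even_iff_odd.mpr hn), if_neg (Nat.not_even_iff_odd.mpr hn),
        if_pos hn.add_one, Real.rpow_neg (by positivity), inv_mul_cancel₀ (by positivity)]

lemma prod_range_altPowWeight_le_one (hc : 0 ≤ c) (n : ℕ) :
    ∏ j ∈ range n, altPowWeight c j ≤ 1 := by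
  rw [prod_range_altPowWeight]
  split_ifs
  · exact le_rfl
  · exact Real.rpow_le_one_of_one_le_of_nonpos (le_add_of_nonneg_left n.cast_nonneg)
      (neg_nonpos.2 hc)

lemma rpow_neg_le_prod_range_altPowWeight (hc : 0 ≤ c) (n : ℕ) :
    ((n : ℝ) + 1) ^ (-c) ≤ ∏ j ∈ range n, altPowWeight c j := by
  rw [prod_range_altPowWeight]
  split_ifs
  · exact Real.rpow_le_one_of_one_le_of_nonpos (le_add_of_nonneg_left n.cast_nonneg)
      (neg_nonpos.2 hc)
  · exact le_rfl

lemma prod_range_altPowWeight_shift_le (hc : 0 ≤ c) (n k : ℕ) :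
    ∏ j ∈ range k, altPowWeight c (n + j + 1) ≤ ((n : ℝ) + 2) ^ c := by
  have hblock :
      (∏ j ∈ range (n + 1), altPowWeight c j) * ∏ j ∈ range k, altPowWeight c (n + j + 1) =
        ∏ j ∈ range (n + 1 + k), altPowWeight c j := by
    rw [prod_range_add _ (n + 1) k]
    simp_rw [Nat.add_right_comm n _ 1]
  set block := ∏ j ∈ range k, altPowWeight c (n + j + 1)
  have hlower : ((n : ℝ) + 2) ^ (-c) ≤ ∏ j ∈ range (n + 1), altPowWeight c j := by
    simpa [add_assoc, one_add_one_eq_two] using rpow_neg_le_prod_range_altPowWeight hc (n + 1)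
  have key : block * ((n : ℝ) + 2) ^ (-c) ≤ 1 :=
    calc block * ((n : ℝ) + 2) ^ (-c)
        ≤ block * ∏ j ∈ range (n + 1), altPowWeight c j :=
          mul_le_mul_of_nonneg_left hlower (prod_nonneg fun j _ => (altPowWeight_pos _).le)
      _ = ∏ j ∈ range (n + 1 + k), altPowWeight c j := by rw [mul_comm, hblock]
      _ ≤ 1 := prod_range_altPowWeight_le_one hc _
  rwa [Real.rpow_neg (by positivity), ← div_eq_mul_inv, div_le_one (by positivity)] at key

end altPowWeight

lemma exp_neg_log_mul_natCast {b : ℝ} (hb : 0 < b) (k : ℕ) : exp (-log b * k) = b⁻¹ ^ k := by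
  rw [← log_inv, ← rpow_def_of_pos (inv_pos.2 hb), rpow_natCast]

/-- Example: the system is P-nonuniformly exponentially dichotomic, with
`α = -ln b` and the nondecreasing sequence `N(n) = (n+2)^c`. -/
theorem example_nonuniform_exponential_dichotomy
    (b c : ℝ) (hb0 : 0 < b) (hb1 : b < 1) (hc : 0 < c)
    (a : ℕ → ℝ)
    (ha : ∀ n, a n = if Even n then (((n : ℝ) + 2) ^ c)⁻¹ else ((n : ℝ) + 1) ^ c)
    (A : ℕ → ℝ × ℝ →L[ℝ] ℝ × ℝ) (hA : ∀ n, A n = diagCLM (b * a n) b⁻¹) :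
    (∀ m n : ℕ, n ≤ m → ∀ x : ℝ × ℝ,
      exp ((-Real.log b) * ((m : ℝ) - n)) *
          (‖evolP A projFst m n x‖ + ‖(1 - projFst n) x‖) ≤
        ((n : ℝ) + 2) ^ c * ‖projFst n x‖ +
          ((m : ℝ) + 2) ^ c * ‖evolQ A projFst m n x‖) ∧
    IsNED A projFst := by
  obtain rfl : a = altPowWeight c := funext ha
  have hbound := dichotomy_ineq_of_diagCLM hA (N := fun n => ((n : ℝ) + 2) ^ c)
    (fun n k => by
      rw [exp_neg_log_mul_natCast hb0, prod_mul_distrib, prod_const, card_range,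
        abs_of_pos (mul_pos (pow_pos hb0 k) (prod_pos fun j _ => altPowWeight_pos _)),
        ← mul_assoc, ← mul_pow, inv_mul_cancel₀ hb0.ne', one_pow, one_mul]
      exact prod_range_altPowWeight_shift_le hc.le n k)
    (fun n k => by
      rw [exp_neg_log_mul_natCast hb0, prod_const, card_range, abs_of_pos (by positivity)]
      exact le_mul_of_one_le_left (by positivity)
        (one_le_rpow (le_add_of_nonneg_of_le (Nat.cast_nonneg _) one_le_two) hc.le))
  refine ⟨hbound, -log b, neg_pos.2 (log_neg hb0 hb1), _, fun n => by positivity,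
    fun i j hij => ?_, hbound⟩
  exact rpow_le_rpow (by positivity) (by gcongr) hc.le
end

section
/- Let b ∈ (0,1) and c > 0, and consider the system on X = ℝ² given by A(n)(x₁,x₂) = (b a_n x₁, x₂/b), where a_n = 1/(n+2)^c if n is even and a_n = (n+1)^c if n is odd, with projections P(n)(x₁,x₂) = (x₁,0). Then the system is not P-uniformly exponentially dichotomic: there do not exist constants N ≥ 1 and α > 0 such that e^{α(m−n)}(‖𝒜_P(m,n)x‖ + ‖Q(n)x‖) ≤ N(‖P(n)x‖ + ‖𝒜_Q(m,n)x‖) for all m ≥ n and all x ∈ ℝ². -/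
open Real

/-- Example: the system is not P-uniformly exponentially dichotomic. -/
theorem example_not_uniform_exponential_dichotomy
    (b c : ℝ) (hb0 : 0 < b) (hb1 : b < 1) (hc : 0 < c)
    (a : ℕ → ℝ)
    (ha : ∀ n, a n = if Even n then (((n : ℝ) + 2) ^ c)⁻¹ else ((n : ℝ) + 1) ^ c)
    (A : ℕ → ℝ × ℝ →L[ℝ] ℝ × ℝ) (hA : ∀ n, A n = diagCLM (b * a n) b⁻¹) :
    ¬ IsUED A projFst := by
  rintro ⟨N, α, hN, hα, h⟩
  have hN0 : 0 < N := lt_of_lt_of_le one_pos hN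
  set M := N / (b * Real.exp α) with hM
  have hM0 : 0 < M := div_pos hN0 (mul_pos hb0 (Real.exp_pos α))
  obtain ⟨K, hK⟩ := exists_nat_gt (M ^ c⁻¹)
  set n := 2 * K with hn
  have hodd : ¬ Even (n + 1) := by simp [hn, Nat.even_add_one]
  have ha1 : a (n + 1) = ((n : ℝ) + 2) ^ c := by
    rw [ha]
    rw [if_neg hodd]
    push_cast
    ring_nf
  have hev : evol A (n + 1) n = A (n + 1) := by
    have h1 : n + 1 - n = 1 := by omega
    simp [evol, h1, evolFrom, ContinuousLinearMap.comp_id, ContinuousLinearMap.one_def]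
  have key := h (n + 1) n (Nat.le_succ n) (1, 0)
  have hP : projFst n ((1 : ℝ), (0 : ℝ)) = (1, 0) := by
    simp [projFst]
  have hQ : (1 - projFst n) ((1 : ℝ), (0 : ℝ)) = (0, 0) := by
    simp [projFst, Prod.ext_iff]
  have hAx : A (n + 1) ((1 : ℝ), (0 : ℝ)) = (b * a (n + 1), 0) := by
    rw [hA]
    simp [diagCLM]
  have hPx : evolP A projFst (n + 1) n (1, 0) = (b * a (n + 1), 0) := by
    simp only [evolP, ContinuousLinearMap.comp_apply, hP, hev, hAx]
  have hQx : evolQ A projFst (n + 1) n (1, 0) = 0 := by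
    simp only [evolQ, ContinuousLinearMap.comp_apply, hQ, hev]
    rw [hA]
    simp [diagCLM, Prod.ext_iff]
  rw [hPx, hQx] at key
  have hnorm1 : ‖((b * a (n+1) : ℝ), (0:ℝ))‖ = b * a (n + 1) := by
    rw [Prod.norm_def, ha1]
    simp only [norm_zero, norm_mul, Real.norm_eq_abs]
    rw [abs_of_pos hb0, abs_of_pos (Real.rpow_pos_of_pos (by positivity) c)]
    exact max_eq_left (by positivity)
  rw [hnorm1, hQ, hP] at key
  have hcast : ((n + 1 : ℕ) : ℝ) - (n : ℝ) = 1 := by push_cast; ring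
  rw [hcast] at key
  simp only [Prod.norm_def] at key
  norm_num at key
  -- key : exp α * (b * a (n+1)) ≤ N
  have hgt : M < ((n : ℝ) + 2) ^ c := by
    have h1 : M ^ c⁻¹ < (n : ℝ) + 2 := by
      have : (K : ℝ) ≤ (n : ℝ) := by
        simp only [hn]; push_cast; linarith [Nat.cast_nonneg (α := ℝ) K]
      linarith
    calc M = (M ^ c⁻¹) ^ c := (Real.rpow_inv_rpow hM0.le hc.ne').symm
      _ < ((n : ℝ) + 2) ^ c :=
        Real.rpow_lt_rpow (Real.rpow_nonneg hM0.le _) h1 hc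
  have hfin : N < Real.exp α * (b * a (n + 1)) := by
    rw [ha1]
    have : Real.exp α * (b * M) = N := by
      rw [hM]; field_simp
    calc N = Real.exp α * (b * M) := this.symm
      _ < Real.exp α * (b * ((n : ℝ) + 2) ^ c) := by
        apply mul_lt_mul_of_pos_left _ (Real.exp_pos α)
        exact mul_lt_mul_of_pos_left hgt hb0
  linarith
end

section
/- Let c₁, c₂ > 0 and consider the system on X = ℝ² given by A(n)(x₁,x₂) = (c₁ a_n x₁, c₂ a_n x₂), where a_n = e^{−n} if n is even and a_n = e^{n+1} if n is odd, with projections P(n)(x₁,x₂) = (x₁,0). Then the system is not P-uniformly exponentially dichotomic: there do not exist constants N ≥ 1 and α > 0 such that e^{α(m−n)}(‖𝒜_P(m,n)x‖ + ‖Q(n)x‖) ≤ N(‖P(n)x‖ + ‖𝒜_Q(m,n)x‖) for all m ≥ n and all x ∈ ℝ². -/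
open Real

/-- Example: the system `A(n)(x₁,x₂) = (c₁ aₙ x₁, c₂ aₙ x₂)` is not
P-uniformly exponentially dichotomic. -/
theorem example_not_uniform_exponential_dichotomy'
    (c₁ c₂ : ℝ) (hc₁ : 0 < c₁) (hc₂ : 0 < c₂)
    (a : ℕ → ℝ)
    (ha : ∀ n, a n = if Even n then exp (-(n : ℝ)) else exp ((n : ℝ) + 1))
    (A : ℕ → ℝ × ℝ →L[ℝ] ℝ × ℝ) (hA : ∀ n, A n = diagCLM (c₁ * a n) (c₂ * a n)) :
    ¬ IsUED A projFst := by
  rintro ⟨N, α, hN, hα, h⟩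
  set k : ℕ := ⌈N * c₂⌉₊ with hk
  set n : ℕ := 2 * k + 1 with hn
  have heven : Even (n + 1) := by
    simp [hn, Nat.even_add_one, parity_simps]
  have ha' : a (n + 1) = exp (-((n : ℝ) + 1)) := by
    rw [ha, if_pos heven]
    push_cast
    ring_nf
  have key := h (n + 1) n (Nat.le_succ n) ((0 : ℝ), (1 : ℝ))
  have hev : evol A (n + 1) n = A (n + 1) := by
    simp [evol, evolFrom, ContinuousLinearMap.one_def, ContinuousLinearMap.comp_id]
  have hP : projFst n ((0 : ℝ), (1 : ℝ)) = (0, 0) := by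
    simp [projFst]
  have hQ : (1 - projFst n) ((0 : ℝ), (1 : ℝ)) = (0, 1) := by
    simp [projFst, ContinuousLinearMap.sub_apply]
  have hEP : evolP A projFst (n + 1) n ((0 : ℝ), (1 : ℝ)) = 0 := by
    simp [evolP, hev, hP, Prod.mk_zero_zero]
  have hEQ : evolQ A projFst (n + 1) n ((0 : ℝ), (1 : ℝ))
      = (0, c₂ * a (n + 1)) := by
    rw [evolQ, ContinuousLinearMap.comp_apply, hQ, hev, hA, diagCLM]
    simp only [ContinuousLinearMap.prod_apply, ContinuousLinearMap.smul_apply,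
      ContinuousLinearMap.coe_fst', ContinuousLinearMap.coe_snd', smul_eq_mul,
      mul_zero, mul_one]
  rw [hEP, hQ, hEQ, hP] at key
  have h01 : ‖((0 : ℝ), (1 : ℝ))‖ = 1 := by
    simp [Prod.norm_def]
  have h00 : ‖((0 : ℝ), (0 : ℝ))‖ = 0 := by
    simp [Prod.norm_def]
  have hanon : 0 ≤ c₂ * a (n + 1) := by
    rw [ha']; positivity
  have h0c : ‖((0 : ℝ), c₂ * a (n + 1))‖ = c₂ * a (n + 1) := by
    rw [Prod.norm_def]
    simp only [norm_zero, Real.norm_eq_abs]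
    rw [max_eq_right (abs_nonneg _), abs_of_nonneg hanon]
  rw [h01, h00, h0c, norm_zero] at key
  have key2 : exp (α * (((n : ℝ) + 1) - n)) ≤ N * (c₂ * a (n + 1)) := by
    simpa using key
  have hα1 : (1 : ℝ) ≤ exp (α * (((n : ℝ) + 1) - n)) := by
    have h1 : ((n : ℝ) + 1) - n = 1 := by ring
    rw [h1, mul_one]
    exact Real.one_le_exp hα.le
  have hpos : (0 : ℝ) < exp ((n : ℝ) + 1) := Real.exp_pos _
  have hNc : N * c₂ < exp ((n : ℝ) + 1) := by
    have h1 : N * c₂ ≤ (k : ℝ) := Nat.le_ceil _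
    have h2 : (k : ℝ) < ((n : ℝ) + 1) := by
      rw [hn]; push_cast; linarith
    have h3 : ((n : ℝ) + 1) < exp ((n : ℝ) + 1) :=
      lt_of_lt_of_le (by linarith) (Real.add_one_le_exp _)
    linarith
  have hlt : N * (c₂ * a (n + 1)) < 1 := by
    rw [ha', Real.exp_neg, ← mul_assoc]
    have h4 := mul_lt_mul_of_pos_right hNc (inv_pos.mpr hpos)
    rwa [mul_inv_cancel₀ hpos.ne'] at h4
  linarith
end
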